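/- Let B(v) be a branch with roots r₁, r₂ and leaf v, and G obtained by adding vertex q and edges (q,v), (q,r₁), (q,r₂). Assuming Hendrickson's criterion (a 3-connected graph with an M-circuit skeletal subgraph is globally rigid), G is globally rigid. -/

import Mathlib

/-- A *branch* `B(v)`: a graph built from the `K₂` on roots `r₁, r₂` by a
sequence of extensions, in which every non-root vertex has exactly two distinct
parents added strictly earlier (witnessed by `rank`), the leaf `lf = v` is the
last added vertex (nobody's parent), and every non-root non-leaf vertex has at
least one child (so every vertex is an ancestor of the leaf). -/
structure Branch where
  verts : Finset ℕ
  r₁ : ℕ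
  r₂ : ℕ
  lf : ℕ
  root_ne : r₁ ≠ r₂
  r₁_mem : r₁ ∈ verts
  r₂_mem : r₂ ∈ verts
  leaf_mem : lf ∈ verts
  leaf_ne_r₁ : lf ≠ r₁
  leaf_ne_r₂ : lf ≠ r₂
  p₁ : ℕ → ℕ
  p₂ : ℕ → ℕ
  rank : ℕ → ℕ
  parent₁_mem : ∀ x ∈ verts, x ≠ r₁ → x ≠ r₂ → p₁ x ∈ verts
  parent₂_mem : ∀ x ∈ verts, x ≠ r₁ → x ≠ r₂ → p₂ x ∈ verts
  parents_ne : ∀ x ∈ verts, x ≠ r₁ → x ≠ r₂ → p₁ x ≠ p₂ x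
  rank_lt₁ : ∀ x ∈ verts, x ≠ r₁ → x ≠ r₂ → rank (p₁ x) < rank x
  rank_lt₂ : ∀ x ∈ verts, x ≠ r₁ → x ≠ r₂ → rank (p₂ x) < rank x
  leaf_no_child : ∀ x ∈ verts, x ≠ r₁ → x ≠ r₂ → p₁ x ≠ lf ∧ p₂ x ≠ lf
  has_child : ∀ x ∈ verts, x ≠ r₁ → x ≠ r₂ → x ≠ lf →
    ∃ c ∈ verts, c ≠ r₁ ∧ c ≠ r₂ ∧ (p₁ c = x ∨ p₂ c = x)

/-- The edge set of a branch: the root edge together with all parent-child edges. -/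
def Branch.edges (B : Branch) : Finset (Sym2 ℕ) :=
  insert s(B.r₁, B.r₂)
    ((B.verts.filter (fun x => x ≠ B.r₁ ∧ x ≠ B.r₂)).biUnion
      (fun x => {s(x, B.p₁ x), s(x, B.p₂ x)}))

/-- The branch viewed as a simple graph on `ℕ`. -/
def Branch.graph (B : Branch) : SimpleGraph ℕ :=
  SimpleGraph.fromEdgeSet (B.edges : Set (Sym2 ℕ))

/-- The vertex set of the graph `G` obtained from the branch `B` by adding a
new vertex `q`. -/
def extVerts (B : Branch) (q : ℕ) : Finset ℕ := insert q B.verts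

/-- The edge set of the graph `G` obtained from the branch `B` by adding a new
vertex `q` together with the three edges `(q,v)`, `(q,r₁)`, `(q,r₂)`. -/
def extEdges (B : Branch) (q : ℕ) : Finset (Sym2 ℕ) :=
  insert s(q, B.lf) (insert s(q, B.r₁) (insert s(q, B.r₂) B.edges))

/-- The extended graph as a simple graph on `ℕ`. -/
def extGraph (B : Branch) (q : ℕ) : SimpleGraph ℕ :=
  SimpleGraph.fromEdgeSet (extEdges B q : Set (Sym2 ℕ))

/-- A graph (given by vertex and edge finsets) is an M-circuit:
`|E| = 2|V| - 2` and every proper vertex subset `X` with `|X| ≥ 2` induces at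
most `2|X| - 3` edges. -/
def MCirc (V : Finset ℕ) (E : Finset (Sym2 ℕ)) : Prop :=
  ((E.card : ℤ) = 2 * V.card - 2) ∧
  ∀ X ⊂ V, 2 ≤ X.card → (((E ∩ X.sym2).card : ℤ)) ≤ 2 * X.card - 3

/-- A graph is 3-connected: more than 3 vertices, and after removing any two
vertices every pair of remaining vertices is joined by a walk avoiding them. -/
def ThreeConn (V : Finset ℕ) (E : Finset (Sym2 ℕ)) : Prop :=
  3 < V.card ∧
  ∀ t₁ t₂ : ℕ, ∀ x ∈ V, ∀ y ∈ V, x ≠ t₁ → x ≠ t₂ → y ≠ t₁ → y ≠ t₂ →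
    ∃ w : (SimpleGraph.fromEdgeSet (E : Set (Sym2 ℕ))).Walk x y,
      t₁ ∉ w.support ∧ t₂ ∉ w.support

/-!
By Hendrickson's criterion it suffices to show that `G` is an M-circuit and 3-connected.

Counting: charge each edge of the branch to its child endpoint. Every non-root vertex carries two
edges, so `|E(B)| = 2|V(B)| - 3` and `|E(G)| = 2|V(G)| - 2`. Inside a vertex set `Y` a vertex only
carries the edges to its parents in `Y`; when a root is missing from `Y`, the non-roots of lowest
rank in `Y` lose enough parents to give `|E[Y]| ≤ 2|Y| - 3`. If `Y` contains both roots and the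
leaf but not all of `B`, climbing from a missing vertex through children produces a vertex of `Y`
with a parent outside `Y`, so `|E[Y]| ≤ 2|Y| - 4`; this absorbs the three edges at `q`.

Connectivity: delete two vertices. If `q` survives, every surviving vertex reaches `q` by
descending through surviving parents to a root or, when both its parents are deleted, by
climbing through children (all of higher rank, hence surviving) to the leaf. If `q` is deleted,
every vertex keeps a surviving parent and descends to the root edge.
-/

lemma Finset.sum_add_two_mul_card_le {ι : Type*} [DecidableEq ι] {s D : Finset ι} {f : ι → ℕ}
    (hD : D ⊆ s) (hf : ∀ i ∈ s, f i ≤ 2) :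
    ∑ i ∈ s, f i + 2 * D.card ≤ 2 * s.card + ∑ i ∈ D, f i := by
  rw [← Finset.sum_sdiff hD]
  have hrest := Finset.sum_le_sum (s := s \ D) (g := fun _ => 2) fun i hi =>
    hf i (Finset.sdiff_subset hi)
  rw [Finset.sum_const, smul_eq_mul, Finset.card_sdiff_of_subset hD] at hrest
  have := Finset.card_le_card hD
  omega

lemma SimpleGraph.Reachable.exists_walk_support_subset {V : Type*} {G : SimpleGraph V}
    {s : Set V} {x y : s} (h : (G.induce s).Reachable x y) :
    ∃ w : G.Walk x y, ∀ z ∈ w.support, z ∈ s := by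
  obtain ⟨w⟩ := h
  have hw : ∀ z ∈ (w.map (SimpleGraph.Embedding.induce s).toHom).support, z ∈ s := by
    intro z hz
    rw [SimpleGraph.Walk.support_map, List.mem_map] at hz
    obtain ⟨z, -, rfl⟩ := hz
    exact z.2
  exact ⟨_, hw⟩

lemma SimpleGraph.induce_reachable_of_adj {V : Type*} {G : SimpleGraph V} {s : Set V} {x y : V}
    (hx : x ∈ s) (hy : y ∈ s) (h : G.Adj x y) : (G.induce s).Reachable ⟨x, hx⟩ ⟨y, hy⟩ :=
  SimpleGraph.Adj.reachable h

namespace Branch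

variable (B : Branch)

lemma mem_edges_iff {e : Sym2 ℕ} : e ∈ B.edges ↔ e = s(B.r₁, B.r₂) ∨
    ∃ x ∈ B.verts, x ≠ B.r₁ ∧ x ≠ B.r₂ ∧ (e = s(x, B.p₁ x) ∨ e = s(x, B.p₂ x)) := by
  simp [edges, and_assoc]

lemma card_nonroots_add_two :
    (B.verts.filter fun x => x ≠ B.r₁ ∧ x ≠ B.r₂).card + 2 = B.verts.card := by
  have hN : (B.verts.filter fun x => x ≠ B.r₁ ∧ x ≠ B.r₂) = B.verts \ {B.r₁, B.r₂} := by
    ext; simp [and_comm]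
  rw [hN, ← Finset.card_pair B.root_ne, Finset.card_sdiff_add_card_eq_card]
  simp [Finset.insert_subset_iff, B.r₁_mem, B.r₂_mem]

lemma three_le_card_verts : 3 ≤ B.verts.card := by
  have h : ({B.lf, B.r₁, B.r₂} : Finset ℕ).card = 3 :=
    Finset.card_eq_three.2 ⟨_, _, _, B.leaf_ne_r₁, B.leaf_ne_r₂, B.root_ne, rfl⟩
  exact h ▸ Finset.card_le_card (by simp [Finset.insert_subset_iff, B.leaf_mem, B.r₁_mem, B.r₂_mem])

variable {B}

lemma p₁_ne_self {x : ℕ} (hx : x ∈ B.verts) (h₁ : x ≠ B.r₁) (h₂ : x ≠ B.r₂) : B.p₁ x ≠ x :=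
  fun h => (B.rank_lt₁ x hx h₁ h₂).ne (congrArg B.rank h)

lemma p₂_ne_self {x : ℕ} (hx : x ∈ B.verts) (h₁ : x ≠ B.r₁) (h₂ : x ≠ B.r₂) : B.p₂ x ≠ x :=
  fun h => (B.rank_lt₂ x hx h₁ h₂).ne (congrArg B.rank h)

lemma mem_verts_of_mem_edges {e : Sym2 ℕ} (he : e ∈ B.edges) {a : ℕ} (ha : a ∈ e) :
    a ∈ B.verts := by
  rcases B.mem_edges_iff.1 he with rfl | ⟨x, hx, h₁, h₂, rfl | rfl⟩ <;>
    rcases Sym2.mem_iff.1 ha with rfl | rfl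
  exacts [B.r₁_mem, B.r₂_mem, hx, B.parent₁_mem x hx h₁ h₂, hx, B.parent₂_mem x hx h₁ h₂]

lemma notMem_of_mem_edges {q : ℕ} (hq : q ∉ B.verts) {e : Sym2 ℕ} (he : e ∈ B.edges) :
    q ∉ e :=
  fun h => hq (mem_verts_of_mem_edges he h)

lemma not_isDiag_of_mem_edges {e : Sym2 ℕ} (he : e ∈ B.edges) : ¬ e.IsDiag := by
  rcases B.mem_edges_iff.1 he with rfl | ⟨x, hx, h₁, h₂, rfl | rfl⟩ <;>
    rw [Sym2.mk_isDiag_iff]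
  exacts [B.root_ne, (B.p₁_ne_self hx h₁ h₂).symm, (B.p₂_ne_self hx h₁ h₂).symm]

lemma eq_of_parent_edge_eq {x y px py : ℕ} (hx : B.rank px < B.rank x)
    (hy : B.rank py < B.rank y) (h : s(x, px) = s(y, py)) : x = y := by
  rcases Sym2.eq_iff.1 h with ⟨rfl, -⟩ | ⟨rfl, rfl⟩
  · rfl
  · omega

variable (B)

lemma card_edges_add_three : B.edges.card + 3 = 2 * B.verts.card := by
  have hroot : s(B.r₁, B.r₂) ∉ (B.verts.filter fun x => x ≠ B.r₁ ∧ x ≠ B.r₂).biUnion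
      fun x => {s(x, B.p₁ x), s(x, B.p₂ x)} := by
    simp only [Finset.mem_biUnion, Finset.mem_filter, Finset.mem_insert, Finset.mem_singleton]
    rintro ⟨x, ⟨-, h₁, h₂⟩, h | h⟩ <;> rcases Sym2.eq_iff.1 h with ⟨h, -⟩ | ⟨-, h⟩ <;> tauto
  have hdisj : ((B.verts.filter fun x => x ≠ B.r₁ ∧ x ≠ B.r₂ : Finset ℕ) : Set ℕ).PairwiseDisjoint
      fun x => ({s(x, B.p₁ x), s(x, B.p₂ x)} : Finset (Sym2 ℕ)) := by
    intro x hx y hy hxy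
    simp only [Finset.coe_filter, Set.mem_ofPred_eq] at hx hy
    refine Finset.disjoint_left.2 fun e he he' => ?_
    simp only [Finset.mem_insert, Finset.mem_singleton] at he he'
    have := B.rank_lt₁ x hx.1 hx.2.1 hx.2.2
    have := B.rank_lt₂ x hx.1 hx.2.1 hx.2.2
    have := B.rank_lt₁ y hy.1 hy.2.1 hy.2.2
    have := B.rank_lt₂ y hy.1 hy.2.1 hy.2.2
    rcases he with rfl | rfl <;> rcases he' with h | h <;>
      exact hxy (eq_of_parent_edge_eq (by assumption) (by assumption) h)
  have htwo : ∀ x ∈ B.verts.filter (fun x => x ≠ B.r₁ ∧ x ≠ B.r₂),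
      ({s(x, B.p₁ x), s(x, B.p₂ x)} : Finset (Sym2 ℕ)).card = 2 := by
    intro x hx
    simp only [Finset.mem_filter] at hx
    rw [Finset.card_pair]
    simp [B.parents_ne x hx.1 hx.2.1 hx.2.2, (B.p₂_ne_self hx.1 hx.2.1 hx.2.2).symm]
  rw [edges, Finset.card_insert_of_notMem hroot, Finset.card_biUnion hdisj,
    Finset.sum_congr rfl htwo, Finset.sum_const, smul_eq_mul, ← B.card_nonroots_add_two]
  ring

/-- Every edge of `B` inside `Y` is the root edge or joins a non-root `x ∈ Y` to a parent in `Y`. -/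
lemma card_edges_inter_sym2_le (Y : Finset ℕ) :
    (B.edges ∩ Y.sym2).card ≤ ({s(B.r₁, B.r₂)} ∩ Y.sym2).card +
      ∑ x ∈ Y \ {B.r₁, B.r₂}, ({B.p₁ x, B.p₂ x} ∩ Y).card := by
  have hsub : B.edges ∩ Y.sym2 ⊆ ({s(B.r₁, B.r₂)} ∩ Y.sym2) ∪
      (Y \ {B.r₁, B.r₂}).biUnion fun x => ({B.p₁ x, B.p₂ x} ∩ Y).image fun p => s(x, p) := by
    rintro e he
    obtain ⟨he, heY⟩ := Finset.mem_inter.1 he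
    rcases B.mem_edges_iff.1 he with rfl | ⟨x, -, h₁, h₂, rfl | rfl⟩
    · simp [heY]
    all_goals
      rw [Finset.mk_mem_sym2_iff] at heY
      refine Finset.mem_union_right _ (Finset.mem_biUnion.2 ⟨x, ?_, ?_⟩)
      · simp [heY.1, h₁, h₂]
      · exact Finset.mem_image.2 ⟨_, by simp [heY.2], rfl⟩
  refine (Finset.card_le_card hsub).trans ((Finset.card_union_le _ _).trans ?_)
  gcongr
  exact Finset.card_biUnion_le.trans (Finset.sum_le_sum fun x _ => Finset.card_image_le)

lemma card_parents_inter_le {Y S : Finset ℕ} {x : ℕ} (hx : x ∈ B.verts) (h₁ : x ≠ B.r₁)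
    (h₂ : x ≠ B.r₂) (hS : ∀ z ∈ Y \ {B.r₁, B.r₂}, B.rank z < B.rank x → z ∈ S) :
    ({B.p₁ x, B.p₂ x} ∩ Y).card ≤ (Y ∩ {B.r₁, B.r₂}).card + S.card := by
  refine (Finset.card_le_card fun p hp => ?_).trans (Finset.card_union_le _ _)
  obtain ⟨hp, hpY⟩ := Finset.mem_inter.1 hp
  have hrank : B.rank p < B.rank x := by
    simp only [Finset.mem_insert, Finset.mem_singleton] at hp
    rcases hp with rfl | rfl
    exacts [B.rank_lt₁ x hx h₁ h₂, B.rank_lt₂ x hx h₁ h₂]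
  by_cases hroot : p ∈ ({B.r₁, B.r₂} : Finset ℕ)
  · exact Finset.mem_union_left _ (Finset.mem_inter.2 ⟨hpY, hroot⟩)
  · exact Finset.mem_union_right _ (hS p (Finset.mem_sdiff.2 ⟨hpY, hroot⟩) hrank)

lemma card_parents_inter_le_one {Y : Finset ℕ} {x : ℕ} (h : B.p₁ x ∉ Y ∨ B.p₂ x ∉ Y) :
    ({B.p₁ x, B.p₂ x} ∩ Y).card ≤ 1 := by
  rw [Finset.card_le_one]
  intro a ha b hb
  simp only [Finset.mem_inter, Finset.mem_insert, Finset.mem_singleton] at ha hb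
  grind

lemma card_parents_inter_le_two (x : ℕ) (Y : Finset ℕ) : ({B.p₁ x, B.p₂ x} ∩ Y).card ≤ 2 :=
  (Finset.card_le_card Finset.inter_subset_left).trans Finset.card_le_two

lemma card_edges_inter_sym2_add_le_of_roots_mem {Y D : Finset ℕ} (hr₁ : B.r₁ ∈ Y)
    (hr₂ : B.r₂ ∈ Y) (hD : D ⊆ Y \ {B.r₁, B.r₂}) :
    (B.edges ∩ Y.sym2).card + 3 + 2 * D.card ≤
      2 * Y.card + ∑ x ∈ D, ({B.p₁ x, B.p₂ x} ∩ Y).card := by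
  have hcount := B.card_edges_inter_sym2_le Y
  have hrootEdge : ({s(B.r₁, B.r₂)} ∩ Y.sym2).card ≤ 1 :=
    (Finset.card_le_card Finset.inter_subset_left).trans (Finset.card_singleton _).le
  have hNY : (Y \ {B.r₁, B.r₂}).card + 2 = Y.card := by
    rw [← Finset.card_pair B.root_ne, Finset.card_sdiff_add_card_eq_card]
    simp [Finset.insert_subset_iff, hr₁, hr₂]
  have hsum := Finset.sum_add_two_mul_card_le hD fun x _ => B.card_parents_inter_le_two x Y
  omega

lemma sum_card_parents_inter_add_three_le {Y : Finset ℕ} (hY : Y ⊆ B.verts) (h2 : 2 ≤ Y.card)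
    (hroots : B.r₁ ∉ Y ∨ B.r₂ ∉ Y) :
    ∑ x ∈ Y \ {B.r₁, B.r₂}, ({B.p₁ x, B.p₂ x} ∩ Y).card + 3 ≤ 2 * Y.card := by
  set N := Y \ {B.r₁, B.r₂} with hNdef
  have hNY : N.card + (Y ∩ {B.r₁, B.r₂}).card = Y.card := Finset.card_sdiff_add_card_inter _ _
  have hN : ∀ x ∈ N, x ∈ B.verts ∧ x ≠ B.r₁ ∧ x ≠ B.r₂ := fun x hx => by
    simp only [hNdef, Finset.mem_sdiff, Finset.mem_insert, Finset.mem_singleton, not_or] at hx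
    exact ⟨hY hx.1, hx.2⟩
  have hle : ∀ x ∈ N, ({B.p₁ x, B.p₂ x} ∩ Y).card ≤ 2 := fun x _ =>
    B.card_parents_inter_le_two x Y
  have hY₁ : (Y ∩ {B.r₁, B.r₂}).card ≤ 1 := by
    rw [Finset.card_le_one]
    intro a ha b hb
    simp only [Finset.mem_inter, Finset.mem_insert, Finset.mem_singleton] at ha hb
    grind
  obtain ⟨m, hm, hmin⟩ := N.exists_min_image B.rank (Finset.card_pos.1 (by omega))
  have hdm := B.card_parents_inter_le (S := ∅) (hN m hm).1 (hN m hm).2.1 (hN m hm).2.2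
    fun z hz hlt => absurd (hmin z hz) (not_le.2 hlt)
  rw [Finset.card_empty] at hdm
  by_cases hY₀ : (Y ∩ {B.r₁, B.r₂}).card = 1
  · have hsum := Finset.sum_add_two_mul_card_le (Finset.singleton_subset_iff.2 hm) hle
    rw [Finset.card_singleton, Finset.sum_singleton] at hsum
    omega
  -- with no root in `Y`, the second lowest non-root has at most one parent in `Y`
  obtain ⟨m', hm', hmin'⟩ := (N.erase m).exists_min_image B.rank
    (Finset.card_pos.1 (by rw [Finset.card_erase_of_mem hm]; omega))
  obtain ⟨hm'm, hm'N⟩ := Finset.mem_erase.1 hm'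
  have hdm' := B.card_parents_inter_le (S := {m}) (hN m' hm'N).1 (hN m' hm'N).2.1
    (hN m' hm'N).2.2 fun z hz hlt => by
      by_contra hzm
      exact absurd (hmin' z (Finset.mem_erase.2 ⟨by simpa using hzm, hz⟩)) (not_le.2 hlt)
  rw [Finset.card_singleton] at hdm'
  have hsum := Finset.sum_add_two_mul_card_le
    (Finset.insert_subset hm (Finset.singleton_subset_iff.2 hm'N)) hle
  rw [Finset.card_pair (Ne.symm hm'm), Finset.sum_pair (Ne.symm hm'm)] at hsum
  omega

lemma card_edges_inter_sym2_add_three_le {Y : Finset ℕ} (hY : Y ⊆ B.verts) (h2 : 2 ≤ Y.card) :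
    (B.edges ∩ Y.sym2).card + 3 ≤ 2 * Y.card := by
  by_cases hroots : B.r₁ ∈ Y ∧ B.r₂ ∈ Y
  · simpa using B.card_edges_inter_sym2_add_le_of_roots_mem hroots.1 hroots.2
      (Finset.empty_subset _)
  have hrootEdge : ({s(B.r₁, B.r₂)} ∩ Y.sym2).card = 0 := by
    rw [Finset.card_eq_zero, Finset.singleton_inter_of_notMem]
    simpa [Finset.mk_mem_sym2_iff] using hroots
  have hcount := B.card_edges_inter_sym2_le Y
  have hsum := B.sum_card_parents_inter_add_three_le hY h2 (not_and_or.1 hroots)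
  omega

lemma exists_child {x : ℕ} (hx : x ∈ B.verts) (h₁ : x ≠ B.r₁) (h₂ : x ≠ B.r₂) (hlf : x ≠ B.lf) :
    ∃ c ∈ B.verts, c ≠ B.r₁ ∧ c ≠ B.r₂ ∧ (B.p₁ c = x ∨ B.p₂ c = x) ∧ B.rank x < B.rank c := by
  obtain ⟨c, hc, hc₁, hc₂, hpc⟩ := B.has_child x hx h₁ h₂ hlf
  refine ⟨c, hc, hc₁, hc₂, hpc, ?_⟩
  rcases hpc with rfl | rfl
  exacts [B.rank_lt₁ c hc hc₁ hc₂, B.rank_lt₂ c hc hc₁ hc₂]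

/-- Climb from `u` through children until `Y` is entered. -/
lemma exists_parent_notMem {Y : Finset ℕ} (hlf : B.lf ∈ Y) {u : ℕ} (hu : u ∈ B.verts)
    (h₁ : u ≠ B.r₁) (h₂ : u ≠ B.r₂) (huY : u ∉ Y) :
    ∃ c ∈ Y, c ∈ B.verts ∧ c ≠ B.r₁ ∧ c ≠ B.r₂ ∧ (B.p₁ c ∉ Y ∨ B.p₂ c ∉ Y) := by
  set C := (B.verts \ Y).filter fun z => z ≠ B.r₁ ∧ z ≠ B.r₂
  obtain ⟨z, hzC, hmax⟩ := C.exists_max_image B.rank ⟨u, by simp [C, hu, huY, h₁, h₂]⟩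
  simp only [C, Finset.mem_filter, Finset.mem_sdiff] at hzC
  obtain ⟨⟨hz, hzY⟩, hz₁, hz₂⟩ := hzC
  obtain ⟨c, hc, hc₁, hc₂, hpc, hlt⟩ :=
    B.exists_child hz hz₁ hz₂ fun h => hzY (h ▸ hlf)
  by_cases hcY : c ∈ Y
  · refine ⟨c, hcY, hc, hc₁, hc₂, ?_⟩
    rcases hpc with h | h <;> rw [h] <;> tauto
  · exact absurd (hmax c (by simp [C, hc, hcY, hc₁, hc₂])) (not_le.2 hlt)

lemma card_edges_inter_sym2_add_four_le {Y : Finset ℕ} (hY : Y ⊆ B.verts) (hne : Y ≠ B.verts)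
    (hr₁ : B.r₁ ∈ Y) (hr₂ : B.r₂ ∈ Y) (hlf : B.lf ∈ Y) :
    (B.edges ∩ Y.sym2).card + 4 ≤ 2 * Y.card := by
  obtain ⟨u, hu, huY⟩ := Finset.exists_of_ssubset (Finset.ssubset_iff_subset_ne.2 ⟨hY, hne⟩)
  obtain ⟨c, hcY, -, hc₁, hc₂, hpc⟩ :=
    B.exists_parent_notMem hlf hu (fun h => huY (h ▸ hr₁)) (fun h => huY (h ▸ hr₂)) huY
  have hD : {c} ⊆ Y \ {B.r₁, B.r₂} := by simp [hcY, hc₁, hc₂]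
  have hcount := B.card_edges_inter_sym2_add_le_of_roots_mem hr₁ hr₂ hD
  have hc := card_parents_inter_le_one (B := B) hpc
  rw [Finset.card_singleton, Finset.sum_singleton] at hcount
  omega

variable {B}

lemma graph_adj_p₁ {x : ℕ} (hx : x ∈ B.verts) (h₁ : x ≠ B.r₁) (h₂ : x ≠ B.r₂) :
    B.graph.Adj x (B.p₁ x) := by
  rw [graph, SimpleGraph.fromEdgeSet_adj]
  exact ⟨B.mem_edges_iff.2 (Or.inr ⟨x, hx, h₁, h₂, Or.inl rfl⟩), (p₁_ne_self hx h₁ h₂).symm⟩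

lemma graph_adj_p₂ {x : ℕ} (hx : x ∈ B.verts) (h₁ : x ≠ B.r₁) (h₂ : x ≠ B.r₂) :
    B.graph.Adj x (B.p₂ x) := by
  rw [graph, SimpleGraph.fromEdgeSet_adj]
  exact ⟨B.mem_edges_iff.2 (Or.inr ⟨x, hx, h₁, h₂, Or.inr rfl⟩), (p₂_ne_self hx h₁ h₂).symm⟩

lemma graph_adj_roots : B.graph.Adj B.r₁ B.r₂ := by
  rw [graph, SimpleGraph.fromEdgeSet_adj]
  exact ⟨B.mem_edges_iff.2 (Or.inl rfl), B.root_ne⟩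

lemma graph_adj_of_parent {c z : ℕ} (hc : c ∈ B.verts) (h₁ : c ≠ B.r₁) (h₂ : c ≠ B.r₂)
    (hpc : B.p₁ c = z ∨ B.p₂ c = z) : B.graph.Adj z c := by
  rcases hpc with rfl | rfl
  exacts [(graph_adj_p₁ hc h₁ h₂).symm, (graph_adj_p₂ hc h₁ h₂).symm]

lemma exists_root_reachable {s : Set ℕ}
    (hs : ∀ x ∈ B.verts, x ≠ B.r₁ → x ≠ B.r₂ → x ∈ s → B.p₁ x ∈ s ∨ B.p₂ x ∈ s)
    {x : ℕ} (hx : x ∈ B.verts) (hxs : x ∈ s) :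
    ∃ r, ∃ hr : r ∈ s, (r = B.r₁ ∨ r = B.r₂) ∧ (B.graph.induce s).Reachable ⟨x, hxs⟩ ⟨r, hr⟩ := by
  induction hn : B.rank x using Nat.strong_induction_on generalizing x with
  | _ n ih =>
  by_cases h₁ : x = B.r₁
  · exact ⟨x, hxs, Or.inl h₁, .rfl⟩
  by_cases h₂ : x = B.r₂
  · exact ⟨x, hxs, Or.inr h₂, .rfl⟩
  rcases hs x hx h₁ h₂ hxs with hp | hp
  · obtain ⟨r, hr, hroot, hreach⟩ :=
      ih _ (hn ▸ B.rank_lt₁ x hx h₁ h₂) (B.parent₁_mem x hx h₁ h₂) hp rfl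
    exact ⟨r, hr, hroot,
      (SimpleGraph.induce_reachable_of_adj hxs hp (graph_adj_p₁ hx h₁ h₂)).trans hreach⟩
  · obtain ⟨r, hr, hroot, hreach⟩ :=
      ih _ (hn ▸ B.rank_lt₂ x hx h₁ h₂) (B.parent₂_mem x hx h₁ h₂) hp rfl
    exact ⟨r, hr, hroot,
      (SimpleGraph.induce_reachable_of_adj hxs hp (graph_adj_p₂ hx h₁ h₂)).trans hreach⟩

lemma induce_reachable_of_parent_mem {s : Set ℕ}
    (hs : ∀ x ∈ B.verts, x ≠ B.r₁ → x ≠ B.r₂ → x ∈ s → B.p₁ x ∈ s ∨ B.p₂ x ∈ s)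
    {x y : ℕ} (hx : x ∈ B.verts) (hy : y ∈ B.verts) (hxs : x ∈ s) (hys : y ∈ s) :
    (B.graph.induce s).Reachable ⟨x, hxs⟩ ⟨y, hys⟩ := by
  obtain ⟨r, hr, hroot, hxr⟩ := exists_root_reachable hs hx hxs
  obtain ⟨r', hr', hroot', hyr'⟩ := exists_root_reachable hs hy hys
  refine hxr.trans (SimpleGraph.Reachable.trans ?_ hyr'.symm)
  by_cases hrr : r = r'
  · subst hrr; rfl
  refine SimpleGraph.induce_reachable_of_adj hr hr' ?_
  rcases hroot with rfl | rfl <;> rcases hroot' with rfl | rfl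
  exacts [absurd rfl hrr, graph_adj_roots, graph_adj_roots.symm, absurd rfl hrr]

/-- Climb through children, whose ranks increase, until the leaf. -/
lemma induce_reachable_lf {s : Set ℕ} {x : ℕ} (hx : x ∈ B.verts) (h₁ : x ≠ B.r₁)
    (h₂ : x ≠ B.r₂) (hs : ∀ z ∈ B.verts, B.rank x ≤ B.rank z → z ∈ s) :
    ∃ hlf : B.lf ∈ s,
      (B.graph.induce s).Reachable ⟨x, hs x hx le_rfl⟩ ⟨B.lf, hlf⟩ := by
  classical
  set C := B.verts.filter fun z => z ≠ B.r₁ ∧ z ≠ B.r₂ ∧ B.rank x ≤ B.rank z ∧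
    ∃ hz : z ∈ s, (B.graph.induce s).Reachable ⟨x, hs x hx le_rfl⟩ ⟨z, hz⟩
  obtain ⟨z, hzC, hmax⟩ := C.exists_max_image B.rank
    ⟨x, Finset.mem_filter.2 ⟨hx, h₁, h₂, le_rfl, _, .rfl⟩⟩
  obtain ⟨hz, hz₁, hz₂, hxz, hzs, hreach⟩ := Finset.mem_filter.1 hzC
  by_cases hzlf : z = B.lf
  · subst hzlf
    exact ⟨hzs, hreach⟩
  obtain ⟨c, hc, hc₁, hc₂, hpc, hlt⟩ := B.exists_child hz hz₁ hz₂ hzlf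
  have hcs := hs c hc (by omega)
  have hreach' := hreach.trans
    (SimpleGraph.induce_reachable_of_adj hzs hcs (graph_adj_of_parent hc hc₁ hc₂ hpc))
  have := hmax c (Finset.mem_filter.2 ⟨hc, hc₁, hc₂, by omega, hcs, hreach'⟩)
  omega

end Branch

section Extension

variable {B : Branch} {q : ℕ}

lemma card_extEdges (hq : q ∉ B.verts) : (extEdges B q).card = B.edges.card + 3 := by
  have hq' : ∀ a, s(q, a) ∉ B.edges := fun a he =>
    B.notMem_of_mem_edges hq he (Sym2.mem_mk_left q a)
  have hne : ∀ a ∈ B.verts, q ≠ a := fun a ha h => hq (h ▸ ha)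
  rw [extEdges, Finset.card_insert_of_notMem, Finset.card_insert_of_notMem,
    Finset.card_insert_of_notMem (hq' _)]
  · simp [hq', B.root_ne, hne _ B.r₂_mem]
  · simp [hq', B.leaf_ne_r₁, B.leaf_ne_r₂, hne _ B.r₁_mem, hne _ B.r₂_mem]

lemma extEdges_inter_sym2_of_notMem {X : Finset ℕ} (hqX : q ∉ X) :
    extEdges B q ∩ X.sym2 = B.edges ∩ X.sym2 := by
  ext e
  simp only [extEdges, Finset.mem_inter, Finset.mem_insert]
  constructor
  · rintro ⟨rfl | rfl | rfl | he, heX⟩ <;>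
      first | exact ⟨he, heX⟩ | exact absurd (Finset.mk_mem_sym2_iff.1 heX).1 hqX
  · exact fun ⟨he, heX⟩ => ⟨Or.inr (Or.inr (Or.inr he)), heX⟩

lemma card_extEdges_inter_sym2_insert_le (hq : q ∉ B.verts) (Y : Finset ℕ) :
    (extEdges B q ∩ (insert q Y).sym2).card ≤
      (B.edges ∩ Y.sym2).card + (Y ∩ {B.lf, B.r₁, B.r₂}).card := by
  have hsub : extEdges B q ∩ (insert q Y).sym2 ⊆
      (B.edges ∩ Y.sym2) ∪ (Y ∩ {B.lf, B.r₁, B.r₂}).image fun a => s(q, a) := by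
    have hY : ∀ a ∈ B.verts, a ∈ insert q Y → a ∈ Y := fun a ha h =>
      (Finset.mem_insert.1 h).resolve_left fun h' => hq (h' ▸ ha)
    have hqa : ∀ a ∈ B.verts, a ∈ ({B.lf, B.r₁, B.r₂} : Finset ℕ) →
        s(q, a) ∈ (insert q Y).sym2 → a ∈ Y ∩ {B.lf, B.r₁, B.r₂} := fun a ha ha' heX =>
      Finset.mem_inter.2 ⟨hY a ha (Finset.mk_mem_sym2_iff.1 heX).2, ha'⟩
    intro e he
    simp only [extEdges, Finset.mem_inter, Finset.mem_insert] at he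
    obtain ⟨rfl | rfl | rfl | he, heX⟩ := he
    · exact Finset.mem_union_right _ (Finset.mem_image_of_mem _ (hqa _ B.leaf_mem (by simp) heX))
    · exact Finset.mem_union_right _ (Finset.mem_image_of_mem _ (hqa _ B.r₁_mem (by simp) heX))
    · exact Finset.mem_union_right _ (Finset.mem_image_of_mem _ (hqa _ B.r₂_mem (by simp) heX))
    · exact Finset.mem_union_left _ (Finset.mem_inter.2 ⟨he, Finset.mem_sym2_iff.2 fun a ha =>
        hY a (B.mem_verts_of_mem_edges he ha) (Finset.mem_sym2_iff.1 heX a ha)⟩)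
  exact (Finset.card_le_card hsub).trans ((Finset.card_union_le _ _).trans
    (Nat.add_le_add_left Finset.card_image_le _))

lemma card_extEdges_inter_sym2_insert_add_three_le (hq : q ∉ B.verts) {Y : Finset ℕ}
    (hY : Y ⊆ B.verts) (hne : Y ≠ B.verts) (hpos : Y.Nonempty) :
    (extEdges B q ∩ (insert q Y).sym2).card + 3 ≤ 2 * (Y.card + 1) := by
  have hle := card_extEdges_inter_sym2_insert_le hq Y
  have hT : (Y ∩ {B.lf, B.r₁, B.r₂}).card ≤ 3 :=
    (Finset.card_le_card Finset.inter_subset_right).trans Finset.card_le_three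
  obtain ⟨y, rfl⟩ | hY₂ := Finset.Nonempty.exists_eq_singleton_or_nontrivial hpos
  · have h0 : B.edges ∩ ({y} : Finset ℕ).sym2 = ∅ := by
      rw [Finset.sym2_singleton, Finset.inter_singleton_of_notMem]
      exact fun he => B.not_isDiag_of_mem_edges he (Sym2.diag_isDiag y)
    have h1 : (({y} : Finset ℕ) ∩ {B.lf, B.r₁, B.r₂}).card ≤ 1 :=
      (Finset.card_le_card Finset.inter_subset_left).trans (Finset.card_singleton y).le
    rw [h0, Finset.card_empty] at hle
    simp only [Finset.card_singleton]
    omega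
  rw [← Finset.one_lt_card_iff_nontrivial] at hY₂
  by_cases hall : B.lf ∈ Y ∧ B.r₁ ∈ Y ∧ B.r₂ ∈ Y
  · have := B.card_edges_inter_sym2_add_four_le hY hne hall.2.1 hall.2.2 hall.1
    omega
  · have := B.card_edges_inter_sym2_add_three_le hY hY₂
    have hT₂ : (Y ∩ {B.lf, B.r₁, B.r₂}).card < 3 := by
      refine (Finset.card_lt_card (Finset.ssubset_iff_subset_ne.2
        ⟨Finset.inter_subset_right, fun h => hall ?_⟩)).trans_le Finset.card_le_three
      simpa [Finset.insert_subset_iff] using Finset.inter_eq_right.1 h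
    omega

theorem extGraph_mcirc (hq : q ∉ B.verts) : MCirc (extVerts B q) (extEdges B q) := by
  refine ⟨?_, fun X hX h2 => ?_⟩
  · have := B.card_edges_add_three
    rw [card_extEdges hq, extVerts, Finset.card_insert_of_notMem hq]
    omega
  by_cases hqX : q ∈ X
  · have hXY : X = insert q (X.erase q) := (Finset.insert_erase hqX).symm
    have hY : X.erase q ⊆ B.verts := fun y hy =>
      (Finset.mem_insert.1 (hX.subset (Finset.mem_of_mem_erase hy))).resolve_left
        (Finset.ne_of_mem_erase hy)
    have hne : X.erase q ≠ B.verts := fun h => hX.ne (by rw [hXY, h, extVerts])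
    have := card_extEdges_inter_sym2_insert_add_three_le hq hY hne
      (Finset.card_pos.1 (by rw [Finset.card_erase_of_mem hqX]; omega))
    rw [← hXY, Finset.card_erase_add_one hqX] at this
    omega
  · have hXV : X ⊆ B.verts := fun x hx =>
      (Finset.mem_insert.1 (hX.subset hx)).resolve_left fun h => hqX (h ▸ hx)
    have := B.card_edges_inter_sym2_add_three_le hXV h2
    rw [extEdges_inter_sym2_of_notMem hqX]
    omega

lemma graph_le_extGraph : B.graph ≤ extGraph B q :=
  SimpleGraph.fromEdgeSet_mono fun e he => by simp [extEdges, Finset.mem_coe.1 he]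

lemma extGraph_adj (hq : q ∉ B.verts) {a : ℕ} (ha : a = B.lf ∨ a = B.r₁ ∨ a = B.r₂) :
    (extGraph B q).Adj q a := by
  rw [extGraph, SimpleGraph.fromEdgeSet_adj]
  have ha' : a ∈ B.verts := by
    rcases ha with rfl | rfl | rfl
    exacts [B.leaf_mem, B.r₁_mem, B.r₂_mem]
  refine ⟨?_, fun h => hq (h ▸ ha')⟩
  rcases ha with rfl | rfl | rfl <;> simp [extEdges]

lemma extGraph_induce_reachable_q (hq : q ∉ B.verts) {t₁ t₂ : ℕ} (hq₁ : q ≠ t₁) (hq₂ : q ≠ t₂)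
    {x : ℕ} (hx : x ∈ B.verts) (hx₁ : x ≠ t₁) (hx₂ : x ≠ t₂) :
    ((extGraph B q).induce {z | z ≠ t₁ ∧ z ≠ t₂}).Reachable ⟨q, hq₁, hq₂⟩ ⟨x, hx₁, hx₂⟩ := by
  induction hn : B.rank x using Nat.strong_induction_on generalizing x with
  | _ n ih =>
  by_cases hbase : x = B.lf ∨ x = B.r₁ ∨ x = B.r₂
  · exact SimpleGraph.induce_reachable_of_adj _ _ (extGraph_adj hq hbase)
  simp only [not_or] at hbase
  obtain ⟨hlf, h₁, h₂⟩ := hbase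
  by_cases hp₁ : B.p₁ x ≠ t₁ ∧ B.p₁ x ≠ t₂
  · have hadj := graph_le_extGraph (q := q) (Branch.graph_adj_p₁ hx h₁ h₂).symm
    exact (ih _ (hn ▸ B.rank_lt₁ x hx h₁ h₂) (B.parent₁_mem x hx h₁ h₂) hp₁.1 hp₁.2 rfl).trans
      (SimpleGraph.induce_reachable_of_adj _ _ hadj)
  by_cases hp₂ : B.p₂ x ≠ t₁ ∧ B.p₂ x ≠ t₂
  · have hadj := graph_le_extGraph (q := q) (Branch.graph_adj_p₂ hx h₁ h₂).symm
    exact (ih _ (hn ▸ B.rank_lt₂ x hx h₁ h₂) (B.parent₂_mem x hx h₁ h₂) hp₂.1 hp₂.2 rfl).trans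
      (SimpleGraph.induce_reachable_of_adj _ _ hadj)
  have hrank₁ := B.rank_lt₁ x hx h₁ h₂
  have hrank₂ := B.rank_lt₂ x hx h₁ h₂
  have hne := B.parents_ne x hx h₁ h₂
  have habove : ∀ z ∈ B.verts, B.rank x ≤ B.rank z → z ∈ {z | z ≠ t₁ ∧ z ≠ t₂} := by
    rintro z - hz
    constructor <;> rintro rfl <;> grind
  obtain ⟨hlfs, hreach⟩ := Branch.induce_reachable_lf hx h₁ h₂ habove
  exact (SimpleGraph.induce_reachable_of_adj _ hlfs (extGraph_adj hq (Or.inl rfl))).trans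
    (hreach.mono (SimpleGraph.comap_monotone _ graph_le_extGraph)).symm

lemma extGraph_induce_reachable (hq : q ∉ B.verts) {t₁ t₂ x y : ℕ} (hx : x ∈ extVerts B q)
    (hy : y ∈ extVerts B q) (hx₁ : x ≠ t₁) (hx₂ : x ≠ t₂) (hy₁ : y ≠ t₁) (hy₂ : y ≠ t₂) :
    ((extGraph B q).induce {z | z ≠ t₁ ∧ z ≠ t₂}).Reachable ⟨x, hx₁, hx₂⟩ ⟨y, hy₁, hy₂⟩ := by
  by_cases hqs : q ≠ t₁ ∧ q ≠ t₂
  · have hreach : ∀ z ∈ extVerts B q, ∀ hz : z ≠ t₁ ∧ z ≠ t₂,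
        ((extGraph B q).induce {z | z ≠ t₁ ∧ z ≠ t₂}).Reachable ⟨q, hqs⟩ ⟨z, hz⟩ := by
      rintro z hz ⟨hz₁, hz₂⟩
      rcases Finset.mem_insert.1 hz with rfl | hz
      · rfl
      · exact extGraph_induce_reachable_q hq hqs.1 hqs.2 hz hz₁ hz₂
    exact (hreach x hx ⟨hx₁, hx₂⟩).symm.trans (hreach y hy ⟨hy₁, hy₂⟩)
  -- `q` is deleted, so at most one branch vertex is, and a parent of each vertex survives
  have hxV : x ∈ B.verts := (Finset.mem_insert.1 hx).resolve_left (by rintro rfl; tauto)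
  have hyV : y ∈ B.verts := (Finset.mem_insert.1 hy).resolve_left (by rintro rfl; tauto)
  refine (Branch.induce_reachable_of_parent_mem ?_ hxV hyV _ _).mono
    (SimpleGraph.comap_monotone _ graph_le_extGraph)
  intro z hz h₁ h₂ _
  have := B.parents_ne z hz h₁ h₂
  have := B.parent₁_mem z hz h₁ h₂
  have := B.parent₂_mem z hz h₁ h₂
  by_contra! h
  grind

theorem extGraph_threeConn (hq : q ∉ B.verts) : ThreeConn (extVerts B q) (extEdges B q) := by
  refine ⟨?_, fun t₁ t₂ x hx y hy hx₁ hx₂ hy₁ hy₂ => ?_⟩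
  · have := B.three_le_card_verts
    rw [extVerts, Finset.card_insert_of_notMem hq]
    omega
  obtain ⟨w, hw⟩ :=
    (extGraph_induce_reachable hq hx hy hx₁ hx₂ hy₁ hy₂).exists_walk_support_subset
  exact ⟨w, fun h => (hw _ h).1 rfl, fun h => (hw _ h).2 rfl⟩

end Extension

theorem ext_graph_globally_rigid_general
    (GloballyRigid : Finset ℕ → Finset (Sym2 ℕ) → Prop)
    (hendrickson : ∀ (V : Finset ℕ) (E : Finset (Sym2 ℕ)),
      ThreeConn V E → MCirc V E → GloballyRigid V E)
    (B : Branch) (q : ℕ) (hq : q ∉ B.verts) :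
    GloballyRigid (extVerts B q) (extEdges B q) :=
  hendrickson _ _ (extGraph_threeConn hq) (extGraph_mcirc hq)

/-- assuming Hendrickson's criterion (every 3-connected M-circuit
is globally rigid), the graph obtained from a branch `B(v)` by adding a vertex
`q` with edges to `v`, `r₁`, `r₂` is globally rigid. -/
theorem ext_graph_globally_rigid
    (GloballyRigid : Finset ℕ → Finset (Sym2 ℕ) → Prop)
    (hendrickson : ∀ (V : Finset ℕ) (E : Finset (Sym2 ℕ)),
      ThreeConn V E → MCirc V E → GloballyRigid V E)
    (B : Branch) (q : ℕ) (hq : q ∉ B.verts) (h4 : 4 ≤ B.verts.card) :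
    GloballyRigid (extVerts B q) (extEdges B q) :=
  ext_graph_globally_rigid_general GloballyRigid hendrickson B q hq
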